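/- (Lemma 3.) Fix an integer N ≥ 2, reals λ > 0, S̄ > 0, and for each i = 1,…,N reals θ_i > 0, γ_i > 0, and c_i defined by c_i = 1 if i ∈ {1, N} and c_i = 2 otherwise. Let ψ_i = c_i γ_i / (λ(N−1)) and let x_i* > 0 be the unique solution of 2^{x}·(ln(2)·x − 1) + 1 = ψ_i. Then the Lagrangian L(d) = (1/(N−1))·Σ_{i=1}^{N−1}(d_i + d_{i+1}) + λ·(Σ_{i=1}^{N} (d_i/γ_i)·(2^{S̄/d_i} − 1) − E_S) attains its minimum over the set {d ∈ ℝᴺ : d_i ≥ θ_i for all i} at d_i* = max{θ_i, S̄/x_i*}; that is, L(d) ≥ L(d*) for all d with d_i ≥ θ_i. -/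

import Mathlib

/-!
Since `c₁ = c_N = 1` and `cᵢ = 2` otherwise, the Lagrangian splits as a constant plus
`Σᵢ fᵢ(dᵢ)` with `fᵢ(t) = (cᵢ/(N−1))·t + (λ/γᵢ)·t·(2^{S̄/t} − 1)`, so it suffices to minimise
each `fᵢ` over `[θᵢ, ∞)`. Its derivative is `cᵢ/(N−1) − (λ/γᵢ)·h(S̄/t)` with
`h(y) = 2^y·(ln 2·y − 1) + 1`, which is increasing on `[0, ∞)`. As `h(xᵢ*) = ψᵢ`, `fᵢ`
decreases on `(0, S̄/xᵢ*]` and increases on `[S̄/xᵢ*, ∞)`, so its minimum over `[θᵢ, ∞)`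
is at `max{θᵢ, S̄/xᵢ*}`.
-/

open Set Finset

theorem apply_max_le_of_antitoneOn_of_monotoneOn {α β : Type*} [LinearOrder α] [Preorder β]
    {f : α → β} {θ t₀ t : α} (hanti : AntitoneOn f (Icc θ t₀)) (hmono : MonotoneOn f (Ici t₀))
    (ht : θ ≤ t) : f (max θ t₀) ≤ f t := by
  rcases le_or_gt t₀ t with ht₀ | ht₀
  · exact hmono (le_max_right θ t₀) ht₀ (max_le ht ht₀)
  · rw [max_eq_right (ht.trans ht₀.le)]
    exact hanti ⟨ht, ht₀.le⟩ ⟨ht.trans ht₀.le, le_rfl⟩ ht₀.le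

theorem sum_range_add_succ_eq_sum_ite {M : Type*} [AddCommMonoid M] {N : ℕ} (hN : 2 ≤ N)
    (e : ℕ → M) :
    ∑ i ∈ range (N - 1), (e i + e (i + 1)) =
      ∑ i ∈ range N, (if i = 0 ∨ i = N - 1 then 1 else 2) • e i := by
  obtain ⟨n, rfl⟩ : ∃ n, N = n + 2 := ⟨N - 2, by omega⟩
  have hmiddle : ∑ i ∈ range n, (if i + 1 = 0 ∨ i + 1 = n + 2 - 1 then 1 else 2) • e (i + 1) =
      ∑ i ∈ range n, (e (i + 1) + e (i + 1)) := by
    refine Finset.sum_congr rfl fun i hi => ?_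
    rw [if_neg (by simp at hi; omega), two_nsmul]
  rw [sum_range_succ _ (n + 1), sum_range_succ', hmiddle, show n + 2 - 1 = n + 1 by rfl,
    sum_add_distrib, sum_range_succ', sum_range_succ _ n, sum_add_distrib]
  simp only [Nat.right_eq_add, Nat.add_eq_zero_iff, one_ne_zero, and_false, or_false, ↓reduceIte,
    one_smul, or_true]
  abel

/-- `-energySlope (S / t)` is the derivative of `t ↦ t * (2 ^ (S / t) - 1)`. -/
noncomputable def energySlope (y : ℝ) : ℝ := 2 ^ y * (Real.log 2 * y - 1) + 1

theorem hasDerivAt_energySlope (y : ℝ) :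
    HasDerivAt energySlope (2 ^ y * (Real.log 2 * Real.log 2 * y)) y := by
  have hpow := (Real.hasStrictDerivAt_const_rpow (a := 2) (by norm_num) y).hasDerivAt
  have hlin := ((hasDerivAt_id y).const_mul (Real.log 2)).sub_const 1
  refine ((hpow.mul hlin).add_const 1).congr_deriv ?_
  simp only [id]
  ring

theorem monotoneOn_energySlope : MonotoneOn energySlope (Ici 0) := by
  refine monotoneOn_of_hasDerivWithinAt_nonneg (convex_Ici 0)
    (fun y _ => (hasDerivAt_energySlope y).continuousAt.continuousWithinAt)
    (fun y _ => (hasDerivAt_energySlope y).hasDerivWithinAt) fun y hy => ?_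
  rw [interior_Ici, Set.mem_Ioi] at hy
  have hlog := Real.log_pos (by norm_num : (1 : ℝ) < 2)
  positivity

noncomputable def lagrangeTerm (a b S t : ℝ) : ℝ := a * t + b * (t * (2 ^ (S / t) - 1))

theorem hasDerivAt_lagrangeTerm (a b S : ℝ) {t : ℝ} (ht : t ≠ 0) :
    HasDerivAt (lagrangeTerm a b S) (a - b * energySlope (S / t)) t := by
  have hquot : HasDerivAt (fun t : ℝ => S / t) (S * -(t ^ 2)⁻¹) t := by
    simpa [div_eq_mul_inv] using (hasDerivAt_inv ht).const_mul S
  have hpow := ((Real.hasStrictDerivAt_const_rpow (a := 2) (by norm_num) (S / t)).hasDerivAt.comp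
    t hquot).sub_const 1
  refine (((hasDerivAt_id t).const_mul a).add
    (((hasDerivAt_id t).mul hpow).const_mul b)).congr_deriv ?_
  simp only [energySlope, id, Function.comp_def]
  field_simp
  ring

theorem continuousOn_lagrangeTerm (a b S : ℝ) {D : Set ℝ} (hD : D ⊆ Ioi 0) :
    ContinuousOn (lagrangeTerm a b S) D := fun _ ht =>
  (hasDerivAt_lagrangeTerm a b S (hD ht).ne').continuousAt.continuousWithinAt

section StationaryPoint

variable {a b S x : ℝ} (hb : 0 ≤ b) (hx : 0 < x) (hroot : b * energySlope x = a)
include hb hx hroot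

theorem antitoneOn_lagrangeTerm : AntitoneOn (lagrangeTerm a b S) (Ioc 0 (S / x)) := by
  refine antitoneOn_of_hasDerivWithinAt_nonpos (convex_Ioc 0 _)
    (continuousOn_lagrangeTerm a b S fun t ht => ht.1)
    (fun t ht => (hasDerivAt_lagrangeTerm a b S (interior_subset ht).1.ne').hasDerivWithinAt)
    fun t ht => ?_
  rw [interior_Ioc, Set.mem_Ioo] at ht
  have hxt : x ≤ S / t := by rw [le_div_iff₀ ht.1, mul_comm, ← le_div_iff₀ hx]; exact ht.2.le
  have := mul_le_mul_of_nonneg_left (monotoneOn_energySlope hx.le (hx.le.trans hxt) hxt) hb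
  linarith

theorem monotoneOn_lagrangeTerm (hS : 0 < S) : MonotoneOn (lagrangeTerm a b S) (Ici (S / x)) := by
  have hpos : Ici (S / x) ⊆ Ioi 0 := fun t ht => (div_pos hS hx).trans_le ht
  refine monotoneOn_of_hasDerivWithinAt_nonneg (convex_Ici _)
    (continuousOn_lagrangeTerm a b S hpos)
    (fun t ht => (hasDerivAt_lagrangeTerm a b S
      (hpos (interior_subset ht)).ne').hasDerivWithinAt) fun t ht => ?_
  rw [interior_Ici, Set.mem_Ioi] at ht
  have ht₀ : 0 < t := (div_pos hS hx).trans ht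
  have htx : S / t ≤ x := by rw [div_le_iff₀ ht₀, mul_comm, ← div_le_iff₀ hx]; exact ht.le
  have := mul_le_mul_of_nonneg_left
    (monotoneOn_energySlope (div_pos hS ht₀).le hx.le htx) hb
  linarith

theorem lagrangeTerm_max_le (hS : 0 < S) {θ t : ℝ} (hθ : 0 < θ) (ht : θ ≤ t) :
    lagrangeTerm a b S (max θ (S / x)) ≤ lagrangeTerm a b S t :=
  apply_max_le_of_antitoneOn_of_monotoneOn
    ((antitoneOn_lagrangeTerm hb hx hroot).mono (Icc_subset_Ioc_left hθ))
    (monotoneOn_lagrangeTerm hb hx hroot hS) ht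

end StationaryPoint

/-- Lemma 3: with `cᵢ = 1` for the first and last packet and `cᵢ = 2` otherwise,
`ψᵢ = cᵢγᵢ/(λ(N−1))`, and `xᵢ* > 0` the unique root of `2^x·(ln(2)·x − 1) + 1 = ψᵢ`,
the Lagrangian `L(d)` of P2.a attains its minimum over `{d : dᵢ ≥ θᵢ}` at
`dᵢ* = max{θᵢ, S̄/xᵢ*}` (indices here run `0,…,N−1`). -/
theorem lemma_three_lagrangian_min (N : ℕ) (hN : 2 ≤ N) (lam Sb E_S : ℝ)
    (hlam : 0 < lam) (hS : 0 < Sb)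
    (θ γ x : ℕ → ℝ) (hθ : ∀ i < N, 0 < θ i) (hγ : ∀ i < N, 0 < γ i)
    (hx : ∀ i < N, 0 < x i ∧
      (2 : ℝ) ^ (x i) * (Real.log 2 * x i - 1) + 1 =
        (if i = 0 ∨ i = N - 1 then (1 : ℝ) else 2) * γ i / (lam * ((N : ℝ) - 1))) :
    ∀ d : ℕ → ℝ, (∀ i < N, θ i ≤ d i) →
      (1 / ((N : ℝ) - 1)) *
          ∑ i ∈ Finset.range (N - 1),
            (max (θ i) (Sb / x i) + max (θ (i + 1)) (Sb / x (i + 1))) +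
        lam * (∑ i ∈ Finset.range N,
            (max (θ i) (Sb / x i) / γ i) *
              ((2 : ℝ) ^ (Sb / max (θ i) (Sb / x i)) - 1) - E_S) ≤
      (1 / ((N : ℝ) - 1)) * ∑ i ∈ Finset.range (N - 1), (d i + d (i + 1)) +
        lam * (∑ i ∈ Finset.range N, (d i / γ i) * ((2 : ℝ) ^ (Sb / d i) - 1) - E_S) := by
  intro d hd
  set c : ℕ → ℝ := fun i => if i = 0 ∨ i = N - 1 then 1 else 2
  have hsplit (t : ℕ → ℝ) :
      (1 / ((N : ℝ) - 1)) * ∑ i ∈ range (N - 1), (t i + t (i + 1)) +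
          lam * (∑ i ∈ range N, (t i / γ i) * ((2 : ℝ) ^ (Sb / t i) - 1) - E_S) =
        ∑ i ∈ range N, lagrangeTerm (c i / (N - 1)) (lam / γ i) Sb (t i) - lam * E_S := by
    rw [sum_range_add_succ_eq_sum_ite hN, Finset.mul_sum, mul_sub, Finset.mul_sum,
      ← add_sub_assoc, ← sum_add_distrib]
    congr 1
    refine Finset.sum_congr rfl fun i _ => ?_
    simp only [c, lagrangeTerm, nsmul_eq_mul]
    split_ifs <;> push_cast <;> ring
  rw [hsplit, hsplit]
  gcongr with i hi
  rw [Finset.mem_range] at hi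
  obtain ⟨hxi, hroot⟩ := hx i hi
  refine lagrangeTerm_max_le (div_pos hlam (hγ i hi)).le hxi ?_ hS (hθ i hi) (hd i hi)
  rw [energySlope, hroot]
  field_simp [(hγ i hi).ne']
  rfl
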